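/- arXiv:2306.08160 — 5 statements merged into one kernel-verified Lean document; each statement's English description precedes it below -/
import Mathlib

section
/- Let h ≥ 1 be an integer, c ∈ ℂ with c ≠ 0, and let φ, ψ be germs of holomorphic functions of two variables (λ, t) at (0,0) of the form φ(λ, t) = c·t^{h+1} + r(t) + λ·ψ(λ, t), where r is a holomorphic germ in t vanishing to order at least h+2 at 0. Let φ̇ denote ∂φ/∂t. Then the quotient ring O(ℂ², 0)/⟨φ, φ̇⟩ has complex dimension at least h; that is, the intersection multiplicity at the origin of the curves {φ = 0} and {φ̇ = 0} is at least h. -/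
/-!
On the axis `λ = 0`, `φ(0, t)` has order `h + 1` in `t` and `φt(0, t)` has order `h`. Having
order at least `h` on an axis is preserved under multiplication by arbitrary series, so every
element of `⟨φ, φt⟩` has order at least `h` on that axis, and no nontrivial combination of
`1, t, …, t^(h-1)` lies in the ideal.
-/

namespace MvPowerSeries

open _root_.Finset

variable {σ R : Type*}

section CommSemiring

variable [CommSemiring R]

theorem coeff_single_mul (i : σ) (k : ℕ) (f g : MvPowerSeries σ R) :
    coeff (Finsupp.single i k) (f * g) =
      ∑ p ∈ antidiagonal k,
        coeff (Finsupp.single i p.1) f * coeff (Finsupp.single i p.2) g := by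
  classical
  rw [coeff_mul, Finsupp.antidiagonal_single, sum_map]
  rfl

def axisOrderIdeal (i : σ) (n : ℕ) : Ideal (MvPowerSeries σ R) where
  carrier := {f | ∀ k < n, coeff (Finsupp.single i k) f = 0}
  zero_mem' := by simp
  add_mem' hf hg k hk := by simp [hf k hk, hg k hk]
  smul_mem' a f hf k hk := by
    rw [smul_eq_mul, coeff_single_mul]
    refine sum_eq_zero fun p hp => ?_
    rw [hf p.2 (by have := mem_antidiagonal.mp hp; omega), mul_zero]

theorem axisOrderIdeal_antitone (i : σ) : Antitone (axisOrderIdeal (R := R) i) :=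
  fun _ _ hmn _ hf k hk => hf k (lt_of_lt_of_le hk hmn)

theorem X_pow_mem_axisOrderIdeal (i : σ) (n : ℕ) :
    X i ^ n ∈ axisOrderIdeal (R := R) i n := by
  classical
  intro k hk
  rw [coeff_X_pow, if_neg]
  exact (Finsupp.single_injective i).ne hk.ne

theorem X_mem_axisOrderIdeal {i j : σ} (hij : j ≠ i) (n : ℕ) :
    X j ∈ axisOrderIdeal (R := R) i n := by
  classical
  intro k _
  rw [coeff_X, if_neg]
  simp [Finsupp.single_eq_single_iff, hij.symm]

theorem mem_axisOrderIdeal_of_deriv {i : σ} {n : ℕ} {f g : MvPowerSeries σ R}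
    (hg : ∀ e : σ →₀ ℕ, coeff e g = ((e i : R) + 1) * coeff (e + Finsupp.single i 1) f)
    (hf : f ∈ axisOrderIdeal i (n + 1)) : g ∈ axisOrderIdeal i n := by
  intro k hk
  rw [hg, ← Finsupp.single_add, hf (k + 1) (by omega), mul_zero]

end CommSemiring

theorem linearIndependent_mk_X_pow [CommRing R] {i : σ} {n : ℕ}
    {J : Ideal (MvPowerSeries σ R)} (hJ : J ≤ axisOrderIdeal i n) :
    LinearIndependent R fun k : Fin n => Ideal.Quotient.mk J (X i ^ (k : ℕ)) := by
  classical
  rw [Fintype.linearIndependent_iff]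
  intro a ha j
  have hmem : ∑ k : Fin n, a k • X i ^ (k : ℕ) ∈ J := by
    rw [← Ideal.Quotient.eq_zero_iff_mem, ← Ideal.Quotient.mkₐ_eq_mk R, map_sum]
    simpa only [map_smul, Ideal.Quotient.mkₐ_eq_mk] using ha
  have hcoeff : coeff (Finsupp.single i (j : ℕ)) (∑ k : Fin n, a k • X i ^ (k : ℕ)) = a j := by
    simp [coeff_X_pow, (Finsupp.single_injective i).eq_iff, Fin.val_inj]
  rw [← hcoeff]
  exact hJ hmem j j.2

theorem le_rank_quotient_of_le_axisOrderIdeal [CommRing R] [Nontrivial R] {i : σ} {n : ℕ}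
    {J : Ideal (MvPowerSeries σ R)} (hJ : J ≤ axisOrderIdeal i n) :
    (n : Cardinal) ≤ Module.rank R (MvPowerSeries σ R ⧸ J) := by
  simpa using (linearIndependent_mk_X_pow hJ).cardinal_lift_le_rank

end MvPowerSeries

open MvPowerSeries

-- Variable `0` is the parameter `λ`, variable `1` is `t`.
theorem stmt_13_general (h : ℕ) (c : ℂ)
    (φ φt ψ r : MvPowerSeries (Fin 2) ℂ)
    (hr : ∀ e : Fin 2 →₀ ℕ, (e 0 ≠ 0 ∨ e 1 < h + 2) →
      MvPowerSeries.coeff (R := ℂ) e r = 0)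
    (hφ : φ = MvPowerSeries.C (σ := Fin 2) (R := ℂ) c * MvPowerSeries.X 1 ^ (h + 1)
      + r + MvPowerSeries.X 0 * ψ)
    (hφt : ∀ e : Fin 2 →₀ ℕ, MvPowerSeries.coeff (R := ℂ) e φt =
      ((e 1 : ℂ) + 1) * MvPowerSeries.coeff (R := ℂ) (e + Finsupp.single 1 1) φ) :
    (h : Cardinal) ≤
      Module.rank ℂ (MvPowerSeries (Fin 2) ℂ ⧸ Ideal.span {φ, φt}) := by
  have hr_mem : r ∈ axisOrderIdeal 1 (h + 2) := fun k hk => hr _ (Or.inr (by simpa using hk))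
  have hφ_mem : φ ∈ axisOrderIdeal 1 (h + 1) := by
    rw [hφ]
    refine add_mem (add_mem ?_ ?_) ?_
    · exact Ideal.mul_mem_left _ _ (X_pow_mem_axisOrderIdeal 1 (h + 1))
    · exact axisOrderIdeal_antitone 1 (by omega) hr_mem
    · exact Ideal.mul_mem_right _ _ (X_mem_axisOrderIdeal (by decide) _)
  have hφt_mem : φt ∈ axisOrderIdeal 1 h := mem_axisOrderIdeal_of_deriv hφt hφ_mem
  refine le_rank_quotient_of_le_axisOrderIdeal (i := 1) (Ideal.span_le.mpr ?_)
  exact Set.insert_subset (axisOrderIdeal_antitone 1 h.le_succ hφ_mem)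
    (Set.singleton_subset_iff.mpr hφt_mem)

/-- Formalization in the formal-germ ring `ℂ⟦λ, t⟧ = MvPowerSeries (Fin 2) ℂ`
(variable `0` is the parameter `λ`, variable `1` is `t`).
`φ = c·t^(h+1) + r + λ·ψ` with `r` a series in `t` only, vanishing to order ≥ h+2,
and `φt = ∂φ/∂t`. The quotient by the ideal `⟨φ, φt⟩` has dimension at least `h`. -/
theorem stmt_13 (h : ℕ) (hh : 1 ≤ h) (c : ℂ) (hc : c ≠ 0)
    (φ φt ψ r : MvPowerSeries (Fin 2) ℂ)
    (hr : ∀ e : Fin 2 →₀ ℕ, (e 0 ≠ 0 ∨ e 1 < h + 2) →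
      MvPowerSeries.coeff (R := ℂ) e r = 0)
    (hφ : φ = MvPowerSeries.C (σ := Fin 2) (R := ℂ) c * MvPowerSeries.X 1 ^ (h + 1)
      + r + MvPowerSeries.X 0 * ψ)
    (hφt : ∀ e : Fin 2 →₀ ℕ, MvPowerSeries.coeff (R := ℂ) e φt =
      ((e 1 : ℂ) + 1) * MvPowerSeries.coeff (R := ℂ) (e + Finsupp.single 1 1) φ) :
    (h : Cardinal) ≤
      Module.rank ℂ (MvPowerSeries (Fin 2) ℂ ⧸ Ideal.span {φ, φt}) :=
  stmt_13_general h c φ φt ψ r hr hφ hφt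
end

section
/- Let h ≥ 1, let c ≠ 0, y₀ ∈ ℂ, and let γ_n, φ be holomorphic functions on a neighborhood of y₀ in ℂ of the following form: φ(y₀ + t) = c·t^{h+1} + O(t^{h+2}), and γ_n(y₀ + t) = α·u^{-n} + ε_n(t) where α ≠ 0, |u| > 1, and sup_t |ε_n(t)| = o(|u|^{-n}). Then for every sufficiently large n, the equation γ_n(y) = φ(y) has exactly h+1 solutions near y₀, and they are of the form y = y₀ + t_n^{(i)} with t_n^{(i)} = ω_i·(α u^{-n}/c)^{1/(h+1)} + o(|u|^{-n/(h+1)}), where ω_1, ..., ω_{h+1} range over choices of (h+1)-th roots of unity times a fixed (h+1)-th root. -/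
/-!
Put `w = α u⁻ⁿ` and let `ζ` be an `(h+1)`-th root of `w / c`. At `y₀ + t` the equation
`γ_n = φ` reads `t^(h+1) = ζ^(h+1) v(t)` with `v = 1 + (E_n - r) / w`, and for large `n`
the function `v` is uniformly close to `1` on the disc of radius `15|ζ|`, while the tangency
`r = O(t^(h+2))` forces every solution in the fixed disc of radius `δ'` into the disc of
radius `5|ζ|`. There the solutions are exactly the fixed points of the maps
`t ↦ ω ζ v(t)^(1/(h+1))` with `ω^(h+1) = 1`. By the Schwarz lemma these maps contract a disc of
radius comparable to `|ζ|` around `ωζ`, so each has exactly one fixed point, close to `ωζ`.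
-/

open Metric Set Filter Topology Polynomial
open scoped NNReal

namespace Complex

theorem norm_cpow_sub_one_le {w s : ℂ} (hs : ‖s‖ ≤ 1) (hw : ‖w - 1‖ ≤ 1 / 2) :
    ‖w ^ s - 1‖ ≤ 3 * ‖w - 1‖ := by
  have hw0 : w ≠ 0 := by
    rintro rfl
    norm_num at hw
  have hlog : ‖log w‖ ≤ 3 / 2 * ‖w - 1‖ := by
    simpa using norm_log_one_add_half_le_self hw
  have hexp : ‖log w * s‖ ≤ 3 / 2 * ‖w - 1‖ := by
    rw [norm_mul]
    nlinarith [norm_nonneg (log w), norm_nonneg s]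
  rw [cpow_def_of_ne_zero hw0]
  calc ‖exp (log w * s) - 1‖ ≤ 2 * ‖log w * s‖ := norm_exp_sub_one_le (by linarith)
    _ ≤ 3 * ‖w - 1‖ := by linarith

theorem lipschitzOnWith_of_mapsTo_closedBall {f : ℂ → ℂ} {c z : ℂ} {r M : ℝ} {K : ℝ≥0}
    (hf : DifferentiableOn ℂ f (ball c (3 * r)))
    (hM : MapsTo f (ball c (3 * r)) (closedBall z M)) (hK : M ≤ K * r) :
    LipschitzOnWith K f (ball c r) := by
  refine LipschitzOnWith.of_dist_le_mul fun x hx y hy => ?_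
  have hr : 0 < r := pos_of_mem_ball hy
  have hsub : ball y (2 * r) ⊆ ball c (3 * r) := by
    refine ball_subset_ball' ?_
    rw [mem_ball] at hy
    linarith
  have hmaps : MapsTo f (ball y (2 * r)) (closedBall (f y) (2 * M)) := fun t ht => by
    have h1 := hM (hsub ht)
    have h2 := hM (hsub (mem_ball_self (by positivity)))
    rw [mem_closedBall] at h1 h2 ⊢
    linarith [dist_triangle_right (f t) (f y) z]
  have hxy : x ∈ ball y (2 * r) := by
    rw [mem_ball] at hx hy ⊢
    linarith [dist_triangle_right x y c]
  calc dist (f x) (f y) ≤ 2 * M / (2 * r) * dist x y :=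
        dist_le_div_mul_dist_of_mapsTo_ball (hf.mono hsub) hmaps hxy
    _ ≤ K * dist x y := by
        gcongr
        rw [div_le_iff₀ (by positivity)]
        linarith

theorem existsUnique_mul_apply_eq_self {f : ℂ → ℂ} {ζ ω : ℂ} {ρ M : ℝ} {K : ℝ≥0}
    (hK : K < 1) (hf : LipschitzOnWith K f (ball 0 ρ))
    (hclose : ∀ t ∈ ball (0 : ℂ) ρ, ‖f t - ζ‖ ≤ M) (hM : 0 ≤ M) (hρ : ‖ζ‖ + M < ρ)
    (hω : ‖ω‖ = 1) :
    ∃! t, t ∈ ball (0 : ℂ) ρ ∧ ω * f t = t := by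
  have hg : LipschitzOnWith K (fun t => ω * f t) (ball 0 ρ) :=
    LipschitzOnWith.of_dist_le_mul fun x hx y hy => by
      simpa only [dist_eq_norm, ← mul_sub, norm_mul, hω, one_mul] using hf.dist_le_mul x hx y hy
  have hsub : closedBall (ω * ζ) M ⊆ ball 0 ρ := fun t ht => by
    rw [mem_closedBall, dist_eq_norm] at ht
    rw [mem_ball_zero_iff]
    calc ‖t‖ ≤ ‖t - ω * ζ‖ + ‖ω * ζ‖ := norm_le_norm_sub_add t (ω * ζ)
      _ < ρ := by rw [norm_mul, hω, one_mul]; linarith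
  have hmaps : MapsTo (fun t => ω * f t) (closedBall (ω * ζ) M) (closedBall (ω * ζ) M) :=
    fun t ht => by
      rw [mem_closedBall, dist_eq_norm, ← mul_sub, norm_mul, hω, one_mul]
      exact hclose t (hsub ht)
  obtain ⟨t, ht, hfix, -⟩ := ContractingWith.exists_fixedPoint' isClosed_closedBall.isComplete
    hmaps ⟨hK, (hg.mono hsub).mapsToRestrict hmaps⟩ (mem_closedBall_self hM) (edist_ne_top _ _)
  refine ⟨t, ⟨hsub ht, hfix⟩, fun s ⟨hs, hsfix⟩ => dist_le_zero.1 ?_⟩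
  have := hg.dist_le_mul s hs t (hsub ht)
  simp only [hsfix, hfix.eq] at this
  nlinarith [dist_nonneg (x := s) (y := t), (NNReal.coe_lt_coe.2 hK)]

theorem exists_finset_pow_eq_pow {m : ℕ} {f : ℂ → ℂ} {ζ : ℂ} {ρ M : ℝ} {K : ℝ≥0}
    (hm : m ≠ 0) (hK : K < 1) (hf : LipschitzOnWith K f (ball 0 ρ))
    (hclose : ∀ t ∈ ball (0 : ℂ) ρ, ‖f t - ζ‖ ≤ M) (hM₀ : 0 ≤ M) (hM : M < ‖ζ‖) (hρ : ‖ζ‖ + M < ρ) :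
    ∃ T : Finset ℂ, ↑T = {t | t ∈ ball (0 : ℂ) ρ ∧ t ^ m = f t ^ m} ∧ T.card = m ∧
      ∃ g : ℂ → ℂ, InjOn g T ∧ ∀ t ∈ T, g t ^ m = 1 ∧ ‖t - g t * ζ‖ ≤ M := by
  have hf0 : ∀ t ∈ ball (0 : ℂ) ρ, f t ≠ 0 := fun t ht h0 => by
    have := hclose t ht
    rw [h0, zero_sub, norm_neg] at this
    linarith
  have hroot {ω : ℂ} : ω ∈ nthRootsFinset m (1 : ℂ) ↔ ω ^ m = 1 :=
    mem_nthRootsFinset (Nat.pos_of_ne_zero hm) 1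
  have hfix : ∀ ω ∈ nthRootsFinset m (1 : ℂ), ∃! t, t ∈ ball (0 : ℂ) ρ ∧ ω * f t = t :=
    fun ω hω => existsUnique_mul_apply_eq_self hK hf hclose hM₀ hρ
      (norm_eq_one_of_pow_eq_one (hroot.1 hω) hm)
  choose! p hp hp_unique using hfix
  have hp_div : ∀ ω ∈ nthRootsFinset m (1 : ℂ), p ω / f (p ω) = ω := fun ω hω =>
    div_eq_of_eq_mul (hf0 _ (hp ω hω).1) (hp ω hω).2.symm
  refine ⟨(nthRootsFinset m (1 : ℂ)).image p, ?_, ?_, fun t => t / f t, ?_, ?_⟩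
  · ext t
    simp only [Finset.coe_image, mem_image, Finset.mem_coe, mem_ofPred_eq]
    constructor
    · rintro ⟨ω, hω, rfl⟩
      refine ⟨(hp ω hω).1, ?_⟩
      conv_lhs => rw [← (hp ω hω).2]
      rw [mul_pow, hroot.1 hω, one_mul]
    · rintro ⟨ht, hpow⟩
      have hω : t / f t ∈ nthRootsFinset m (1 : ℂ) := by
        rw [hroot, div_pow, hpow, div_self (pow_ne_zero _ (hf0 t ht))]
      exact ⟨t / f t, hω, (hp_unique _ hω t ⟨ht, div_mul_cancel₀ t (hf0 t ht)⟩).symm⟩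
  · rw [Finset.card_image_of_injOn fun ω₁ h₁ ω₂ h₂ he => by
        rw [← hp_div ω₁ h₁, ← hp_div ω₂ h₂, he],
      (isPrimitiveRoot_exp m hm).card_nthRootsFinset]
  · simp only [InjOn, Finset.coe_image, mem_image, Finset.mem_coe]
    rintro _ ⟨ω₁, h₁, rfl⟩ _ ⟨ω₂, h₂, rfl⟩ he
    rw [hp_div ω₁ h₁, hp_div ω₂ h₂] at he
    rw [he]
  · simp only [Finset.forall_mem_image]
    intro ω hω
    refine ⟨by rw [hp_div ω hω]; exact hroot.1 hω, ?_⟩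
    conv_lhs => rw [hp_div ω hω, ← (hp ω hω).2, ← mul_sub, norm_mul,
      norm_eq_one_of_pow_eq_one (hroot.1 hω) hm, one_mul]
    exact hclose _ (hp ω hω).1

theorem exists_finset_pow_eq_pow_mul {m : ℕ} {ζ : ℂ} {ρ ε : ℝ} {v : ℂ → ℂ}
    (hm : m ≠ 0) (hζ : ζ ≠ 0) (hρ : 2 * ‖ζ‖ ≤ ρ) (hε₀ : 0 ≤ ε) (hε : ε ≤ 1 / 6)
    (hv_hol : DifferentiableOn ℂ v (ball 0 (3 * ρ)))
    (hv : ∀ t ∈ ball (0 : ℂ) (3 * ρ), ‖v t - 1‖ ≤ ε) :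
    ∃ T : Finset ℂ, ↑T = {t | t ∈ ball (0 : ℂ) ρ ∧ t ^ m = ζ ^ m * v t} ∧ T.card = m ∧
      ∃ g : ℂ → ℂ, InjOn g T ∧ ∀ t ∈ T, g t ^ m = 1 ∧ ‖t - g t * ζ‖ ≤ 3 * ε * ‖ζ‖ := by
  have hζ₀ : 0 < ‖ζ‖ := norm_pos_iff.2 hζ
  set f : ℂ → ℂ := fun t => ζ * v t ^ (m⁻¹ : ℂ)
  have hf_pow (t : ℂ) : f t ^ m = ζ ^ m * v t := by
    simp only [f, mul_pow, cpow_nat_inv_pow _ hm]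
  have hf_close : ∀ t ∈ ball (0 : ℂ) (3 * ρ), ‖f t - ζ‖ ≤ 3 * ε * ‖ζ‖ := fun t ht => by
    have hm₁ : ‖(m⁻¹ : ℂ)‖ ≤ 1 := by
      rw [norm_inv, norm_natCast]
      exact inv_le_one_of_one_le₀ (by exact_mod_cast Nat.one_le_iff_ne_zero.2 hm)
    have := norm_cpow_sub_one_le hm₁ ((hv t ht).trans (by linarith))
    calc ‖f t - ζ‖ = ‖ζ‖ * ‖v t ^ (m⁻¹ : ℂ) - 1‖ := by rw [← norm_mul, mul_sub, mul_one]
      _ ≤ 3 * ε * ‖ζ‖ := by nlinarith [hv t ht]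
  have hf_hol : DifferentiableOn ℂ f (ball 0 (3 * ρ)) := fun t ht => by
    refine ((hv_hol t ht).cpow_const ?_).const_mul ζ
    simpa using mem_slitPlane_of_norm_lt_one (z := v t - 1) (by linarith [hv t ht])
  have hf_lip : LipschitzOnWith (1 / 2) f (ball 0 ρ) :=
    lipschitzOnWith_of_mapsTo_closedBall hf_hol
      (fun t ht => mem_closedBall_iff_norm.2 (hf_close t ht)) (by push_cast; nlinarith)
  obtain ⟨T, hT, hcard, hg⟩ := exists_finset_pow_eq_pow hm (by norm_num) hf_lip
    (fun t ht => hf_close t (ball_subset_ball (by linarith) ht)) (by positivity)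
    (by nlinarith) (by nlinarith)
  exact ⟨T, by simp only [hT, hf_pow], hcard, hg⟩

theorem norm_lt_of_add_eq_mul_pow_add {m : ℕ} {c w ζ t r e : ℂ} (hm : m ≠ 0) (hc : c ≠ 0)
    (hζ0 : ζ ≠ 0) (hζ : c * ζ ^ m = w) (ht : w + e = c * t ^ m + r)
    (hr : ‖r‖ ≤ ‖c‖ / 2 * ‖t‖ ^ m) (he : ‖e‖ ≤ ‖w‖) :
    ‖t‖ < 5 * ‖ζ‖ := by
  have hc₀ : 0 < ‖c‖ := norm_pos_iff.2 hc
  have hζm : 0 < ‖ζ‖ ^ m := pow_pos (norm_pos_iff.2 hζ0) m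
  have hbound : ‖c‖ * ‖t‖ ^ m ≤ ‖c‖ * (4 * ‖ζ‖ ^ m) := by
    have : ‖c‖ * ‖t‖ ^ m ≤ ‖w‖ + ‖e‖ + ‖r‖ := by
      rw [← norm_pow, ← norm_mul, show c * t ^ m = w + e - r by linear_combination -ht]
      exact (norm_sub_le _ _).trans (by linarith [norm_add_le w e])
    rw [← hζ, norm_mul, norm_pow] at this he
    nlinarith
  by_contra! hle
  have h5 : (5 * ‖ζ‖) ^ m ≤ ‖t‖ ^ m := pow_le_pow_left₀ (by positivity) hle m
  have h5m : (5 : ℝ) ≤ 5 ^ m := le_self_pow₀ (by norm_num) hm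
  rw [mul_pow] at h5
  nlinarith [le_of_mul_le_mul_left hbound hc₀]

theorem exists_finset_add_eq_mul_pow_add {m : ℕ} {c w ζ : ℂ} {δ ε A : ℝ} {r e : ℂ → ℂ}
    (hm : m ≠ 0) (hc : c ≠ 0) (hw : w ≠ 0) (hζ : c * ζ ^ m = w) (hε₀ : 0 ≤ ε) (hε : ε ≤ 1 / 6)
    (hA : 0 ≤ A) (hδ : 15 * ‖ζ‖ ≤ δ) (hAδ : A * δ ≤ ‖c‖ / 2)
    (hAζ : A * 15 ^ (m + 1) * ‖ζ‖ ≤ ε / 2 * ‖c‖)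
    (hr_hol : DifferentiableOn ℂ r (ball 0 δ)) (he_hol : DifferentiableOn ℂ e (ball 0 δ))
    (hr : ∀ t ∈ ball (0 : ℂ) δ, ‖r t‖ ≤ A * ‖t‖ ^ (m + 1))
    (he : ∀ t ∈ ball (0 : ℂ) δ, ‖e t‖ ≤ ε / 2 * ‖w‖) :
    ∃ T : Finset ℂ, ↑T = {t | t ∈ ball (0 : ℂ) δ ∧ w + e t = c * t ^ m + r t} ∧ T.card = m ∧
      ∃ g : ℂ → ℂ, InjOn g T ∧ ∀ t ∈ T, g t ^ m = 1 ∧ ‖t - g t * ζ‖ ≤ 3 * ε * ‖ζ‖ := by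
  have hζ0 : ζ ≠ 0 := by
    rintro rfl
    exact hw (by rw [← hζ, zero_pow hm, mul_zero])
  have hsub : ball (0 : ℂ) (3 * (5 * ‖ζ‖)) ⊆ ball 0 δ := ball_subset_ball (by linarith)
  have hr_far : ∀ t ∈ ball (0 : ℂ) δ, ‖r t‖ ≤ ‖c‖ / 2 * ‖t‖ ^ m := fun t ht => by
    have : A * ‖t‖ ≤ ‖c‖ / 2 :=
      (mul_le_mul_of_nonneg_left (mem_ball_zero_iff.1 ht).le hA).trans hAδ
    calc ‖r t‖ ≤ A * ‖t‖ * ‖t‖ ^ m := by rw [mul_assoc, ← pow_succ']; exact hr t ht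
      _ ≤ ‖c‖ / 2 * ‖t‖ ^ m := by gcongr
  have hr_near : ∀ t ∈ ball (0 : ℂ) (3 * (5 * ‖ζ‖)), ‖r t‖ ≤ ε / 2 * ‖w‖ := fun t ht => by
    have : ‖t‖ ≤ 15 * ‖ζ‖ := by rw [mem_ball_zero_iff] at ht; linarith
    calc ‖r t‖ ≤ A * (15 * ‖ζ‖) ^ (m + 1) := (hr t (hsub ht)).trans (by gcongr)
      _ = A * 15 ^ (m + 1) * ‖ζ‖ * ‖ζ‖ ^ m := by ring
      _ ≤ ε / 2 * ‖c‖ * ‖ζ‖ ^ m := by gcongr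
      _ = ε / 2 * ‖w‖ := by rw [← hζ, norm_mul, norm_pow]; ring
  set v : ℂ → ℂ := fun t => 1 + (e t - r t) / w
  have hv : ∀ t ∈ ball (0 : ℂ) (3 * (5 * ‖ζ‖)), ‖v t - 1‖ ≤ ε := fun t ht => by
    rw [add_sub_cancel_left, norm_div, div_le_iff₀ (norm_pos_iff.2 hw)]
    linarith [norm_sub_le (e t) (r t), he t (hsub ht), hr_near t ht]
  have hv_hol : DifferentiableOn ℂ v (ball 0 (3 * (5 * ‖ζ‖))) :=
    (((he_hol.sub hr_hol).div_const w).const_add 1).mono hsub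
  have heq (t : ℂ) : w + e t = c * t ^ m + r t ↔ t ^ m = ζ ^ m * v t := by
    have hcv : c * (ζ ^ m * v t) = w + e t - r t := by
      rw [← mul_assoc, hζ, mul_add, mul_one, mul_div_cancel₀ _ hw]
      ring
    conv_rhs => rw [← mul_right_inj' hc, hcv]
    constructor <;> intro h <;> linear_combination -h
  obtain ⟨T, hT, hcard, hg⟩ :=
    exists_finset_pow_eq_pow_mul hm hζ0 (by linarith [norm_nonneg ζ]) hε₀ hε hv_hol hv
  refine ⟨T, ?_, hcard, hg⟩
  ext t
  rw [hT, mem_ofPred_eq, mem_ofPred_eq, heq]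
  constructor
  · exact fun ⟨ht, h⟩ => ⟨ball_subset_ball (by linarith [norm_nonneg ζ]) ht, h⟩
  · refine fun ⟨ht, h⟩ => ⟨mem_ball_zero_iff.2 ?_, h⟩
    exact norm_lt_of_add_eq_mul_pow_add hm hc hζ0 hζ ((heq t).2 h) (hr_far t ht)
      ((he t ht).trans (by nlinarith [norm_nonneg w]))

theorem exists_seq_pow_eq_mul_inv_pow {m : ℕ} (hm : m ≠ 0) (a b : ℂ) :
    ∃ ζ : ℕ → ℂ, (∀ n, ζ n ^ m = a * b⁻¹ ^ n) ∧
      ∀ n, ‖ζ n‖ = ‖a‖ ^ (m⁻¹ : ℝ) * ‖b‖ ^ (-(n : ℝ) / m) := by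
  refine ⟨fun n => (a * b⁻¹ ^ n) ^ (m⁻¹ : ℂ), fun n => cpow_nat_inv_pow _ hm, fun n => ?_⟩
  refine (pow_left_inj₀ (norm_nonneg _) (by positivity) hm).1 ?_
  rw [← norm_pow, cpow_nat_inv_pow _ hm, mul_pow, Real.rpow_inv_natCast_pow (norm_nonneg a) hm,
    ← Real.rpow_natCast (_ ^ _), ← Real.rpow_mul (norm_nonneg b),
    div_mul_cancel₀ _ (Nat.cast_ne_zero.2 hm), Real.rpow_neg (norm_nonneg b), Real.rpow_natCast]
  simp

end Complex

theorem Real.tendsto_rpow_neg_natCast_div {x k : ℝ} (hx : 1 < x) (hk : 0 < k) :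
    Tendsto (fun n : ℕ => x ^ (-(n : ℝ) / k)) atTop (𝓝 0) :=
  (tendsto_rpow_atBot_of_base_gt_one x hx).comp
    ((tendsto_neg_atTop_atBot.comp tendsto_natCast_atTop_atTop).atBot_div_const hk)

theorem stmt_14_general (h : ℕ) (c α u y₀ : ℂ) (hc : c ≠ 0) (hα : α ≠ 0)
    (hu : 1 < ‖u‖) (δ : ℝ) (hδ : 0 < δ)
    (r : ℂ → ℂ) (hr_hol : DifferentiableOn ℂ r (ball (0 : ℂ) δ))
    (A : ℝ) (hr : ∀ t ∈ ball (0 : ℂ) δ, ‖r t‖ ≤ A * ‖t‖ ^ (h + 2))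
    (φ : ℂ → ℂ) (hφ : ∀ t, φ (y₀ + t) = c * t ^ (h + 1) + r t)
    (E : ℕ → ℂ → ℂ) (hE_hol : ∀ n, DifferentiableOn ℂ (E n) (ball (0 : ℂ) δ))
    (γ : ℕ → ℂ → ℂ) (hγ : ∀ n t, γ n (y₀ + t) = α * (u⁻¹) ^ n + E n t)
    (hE : ∀ η : ℝ, 0 < η → ∃ N : ℕ, ∀ n ≥ N, ∀ t ∈ ball (0 : ℂ) δ,
      ‖E n t‖ ≤ η * ‖u‖⁻¹ ^ n) :
    ∃ δ' : ℝ, 0 < δ' ∧ δ' ≤ δ ∧ ∀ κ : ℝ, 0 < κ → ∃ N : ℕ, ∀ n ≥ N,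
      ∃ T : Finset ℂ,
        (↑T = {t : ℂ | t ∈ ball (0 : ℂ) δ' ∧ γ n (y₀ + t) = φ (y₀ + t)}) ∧
        T.card = h + 1 ∧
        ∃ ζ : ℂ, ζ ^ (h + 1) = α * (u⁻¹) ^ n / c ∧
          ∃ g : ℂ → ℂ, Set.InjOn g ↑T ∧ ∀ t ∈ T,
            g t ^ (h + 1) = 1 ∧
            ‖t - g t * ζ‖ ≤ κ * ‖u‖ ^ (-(n : ℝ) / (h + 1)) := by
  have hm : h + 1 ≠ 0 := h.succ_ne_zero
  obtain ⟨A', hA', hrA'⟩ : ∃ A' > 0, ∀ t ∈ ball (0 : ℂ) δ, ‖r t‖ ≤ A' * ‖t‖ ^ (h + 2) :=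
    ⟨max A 1, by positivity, fun t ht => (hr t ht).trans (by gcongr; exact le_max_left A 1)⟩
  obtain ⟨δ', hδ', hδ'δ, hAδ'⟩ : ∃ δ' > 0, δ' ≤ δ ∧ A' * δ' ≤ ‖c‖ / 2 :=
    ⟨min δ (‖c‖ / (2 * A')), lt_min hδ (by positivity), min_le_left _ _, by
      rw [← le_div_iff₀' hA', div_div]; exact min_le_right _ _⟩
  refine ⟨δ', hδ', hδ'δ, fun κ hκ => ?_⟩
  obtain ⟨ζ, hζ_pow, hζ_norm⟩ := Complex.exists_seq_pow_eq_mul_inv_pow hm (α / c) u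
  push_cast at hζ_norm
  set B := ‖α / c‖ ^ (((h : ℝ) + 1)⁻¹)
  have hB : 0 < B := Real.rpow_pos_of_pos (norm_pos_iff.2 (div_ne_zero hα hc)) _
  set ε := min (1 / 6) (κ / (3 * B))
  have hε : 0 < ε := lt_min (by norm_num) (by positivity)
  have hlim : Tendsto (fun n => ‖ζ n‖) atTop (𝓝 0) := by
    simpa [hζ_norm] using (Real.tendsto_rpow_neg_natCast_div hu (by positivity)).const_mul B
  obtain ⟨N, hN⟩ := eventually_atTop.1 <|
    (eventually_atTop.2 (hE (ε / 2 * ‖α‖) (by positivity))).and <|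
    (hlim.eventually (ge_mem_nhds (by positivity : 0 < δ' / 15))).and
    (hlim.eventually (ge_mem_nhds (by positivity : 0 < ε / 2 * ‖c‖ / (A' * 15 ^ (h + 2)))))
  refine ⟨N, fun n hn => ?_⟩
  obtain ⟨hEn, hζδ, hζA⟩ := hN n hn
  have hsub := ball_subset_ball (x := (0 : ℂ)) hδ'δ
  obtain ⟨T, hT, hcard, g, hg, hgT⟩ := Complex.exists_finset_add_eq_mul_pow_add
    (w := α * u⁻¹ ^ n) (e := E n) hm hc
    (mul_ne_zero hα (pow_ne_zero _ (inv_ne_zero (norm_pos_iff.1 (one_pos.trans hu)))))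
    (by rw [hζ_pow]; field_simp) hε.le (min_le_left _ _) hA'.le (by linarith) hAδ'
    ((le_div_iff₀' (by positivity)).1 hζA) (hr_hol.mono hsub) ((hE_hol n).mono hsub)
    (fun t ht => hrA' t (hsub ht)) (fun t ht => by simpa [mul_assoc] using hEn t (hsub ht))
  refine ⟨T, by simp only [hT, hγ, hφ], hcard, ζ n, by rw [hζ_pow]; ring, g, hg,
    fun t ht => ⟨(hgT t ht).1, (hgT t ht).2.trans ?_⟩⟩
  have hεκ : 3 * B * ε ≤ κ := (le_div_iff₀' (by positivity)).1 (min_le_right _ _)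
  rw [hζ_norm]
  nlinarith [Real.rpow_nonneg (norm_nonneg u) (-(n : ℝ) / (h + 1))]

/-- The solutions of `γ_n(y) = φ(y)` near a tangency of order `h` form, for
large `n`, approximately a regular `(h+1)`-gon: there are exactly `h+1`
solutions `y = y₀ + t`, of the form `t = ω·ζ_n + o(|u|^{-n/(h+1)})` where
`ζ_n^{h+1} = α u^{-n}/c` and `ω` ranges over the `(h+1)`-th roots of unity. -/
theorem stmt_14 (h : ℕ) (hh : 1 ≤ h) (c α u y₀ : ℂ) (hc : c ≠ 0) (hα : α ≠ 0)
    (hu : 1 < ‖u‖) (δ : ℝ) (hδ : 0 < δ)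
    (r : ℂ → ℂ) (hr_hol : DifferentiableOn ℂ r (ball (0 : ℂ) δ))
    (A : ℝ) (hr : ∀ t ∈ ball (0 : ℂ) δ, ‖r t‖ ≤ A * ‖t‖ ^ (h + 2))
    (φ : ℂ → ℂ) (hφ : ∀ t, φ (y₀ + t) = c * t ^ (h + 1) + r t)
    (E : ℕ → ℂ → ℂ) (hE_hol : ∀ n, DifferentiableOn ℂ (E n) (ball (0 : ℂ) δ))
    (γ : ℕ → ℂ → ℂ) (hγ : ∀ n t, γ n (y₀ + t) = α * (u⁻¹) ^ n + E n t)
    (hE : ∀ η : ℝ, 0 < η → ∃ N : ℕ, ∀ n ≥ N, ∀ t ∈ ball (0 : ℂ) δ,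
      ‖E n t‖ ≤ η * ‖u‖⁻¹ ^ n) :
    ∃ δ' : ℝ, 0 < δ' ∧ δ' ≤ δ ∧ ∀ κ : ℝ, 0 < κ → ∃ N : ℕ, ∀ n ≥ N,
      ∃ T : Finset ℂ,
        (↑T = {t : ℂ | t ∈ ball (0 : ℂ) δ' ∧ γ n (y₀ + t) = φ (y₀ + t)}) ∧
        T.card = h + 1 ∧
        ∃ ζ : ℂ, ζ ^ (h + 1) = α * (u⁻¹) ^ n / c ∧
          ∃ g : ℂ → ℂ, Set.InjOn g ↑T ∧ ∀ t ∈ T,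
            g t ^ (h + 1) = 1 ∧
            ‖t - g t * ζ‖ ≤ κ * ‖u‖ ^ (-(n : ℝ) / (h + 1)) :=
  stmt_14_general h c α u y₀ hc hα hu δ hδ r hr_hol A hr φ hφ E hE_hol γ hγ hE
end

section
/- Let |u| > 1, h ≥ 1, c ≠ 0, α ≠ 0, ε ∈ (0, (1/10)|α/c|^{1/(h+1)}), and A, δ > 0. Suppose φ(t) = c·t^{h+1} + r(t) with |r(t)| ≤ A|t|^{h+2} on a disk D(0, δ), and γ_n(t) = α·u^{-n} + ε_n(t) with sup |ε_n| = o(|u|^{-n}). Then there exist constants C₁, C₂ > 0 (depending only on ε and the data) such that for all sufficiently large n and all t₀ with |t₀| ≤ ε|u|^{-n/(h+1)}, one has C₁|u|^{-n} ≤ inf_{|t|≤δ} max(|γ_n(t₀) - φ(t)|, |t - t₀|) ≤ C₂|u|^{-n}. -/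
/-!
Put `s = ‖u‖ ^ (-n / (h + 1))`, so that `‖u‖⁻¹ ^ n = s ^ (h + 1)` and `‖t₀‖ ≤ e s`. Taking
`t = t₀` bounds the distance above by `‖γ n t₀‖ + ‖φ t₀‖ = O(s ^ (h + 1))`. For the lower bound,
any `t` with `‖t - t₀‖ < C₁ s ^ (h + 1)` has `‖t‖ ≤ 2 e s`; there the smallness of `e` against
`‖α / c‖` and `s → 0` give `‖φ t‖ ≤ (1/5 + 1/8) ‖α‖ s ^ (h + 1)`, whereas
`‖γ n t₀‖ ≥ (3/4) ‖α‖ s ^ (h + 1)`, so `t` is at height distance at least `(‖α‖/4) s ^ (h + 1)`.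
-/

open Metric Filter Topology

section GraphDist

variable {E F : Type*} [SeminormedAddCommGroup E] [SeminormedAddCommGroup F]

noncomputable def graphDist (φ : F → E) (s : Set F) (p : E) (t₀ : F) : ℝ :=
  sInf ((fun t => max ‖p - φ t‖ ‖t - t₀‖) '' s)

theorem graphDist_le {φ : F → E} {s : Set F} {t₀ : F} (p : E) (ht₀ : t₀ ∈ s) :
    graphDist φ s p t₀ ≤ ‖p - φ t₀‖ := by
  refine csInf_le_of_le ⟨0, ?_⟩ ⟨t₀, ht₀, rfl⟩ (by simp)
  rintro _ ⟨t, -, rfl⟩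
  exact (norm_nonneg _).trans (le_max_left _ _)

theorem le_graphDist {φ : F → E} {s : Set F} {p : E} {t₀ : F} {m : ℝ} (hs : s.Nonempty)
    (h : ∀ t ∈ s, ‖t - t₀‖ < m → m ≤ ‖p - φ t‖) : m ≤ graphDist φ s p t₀ := by
  refine le_csInf (hs.image _) ?_
  rintro _ ⟨t, ht, rfl⟩
  rcases lt_or_ge ‖t - t₀‖ m with hlt | hge
  · exact (h t ht hlt).trans (le_max_left _ _)
  · exact hge.trans (le_max_right _ _)

end GraphDist

theorem rpow_neg_div_succ_pow {a : ℝ} (ha : 0 ≤ a) (n k : ℕ) :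
    (a ^ (-(n : ℝ) / (k + 1))) ^ (k + 1) = a⁻¹ ^ n := by
  rw [← Real.rpow_mul_natCast ha, Nat.cast_add_one, div_mul_cancel₀ _ (by positivity),
    Real.rpow_neg ha, Real.rpow_natCast, inv_pow]

theorem tendsto_rpow_neg_div_succ {a : ℝ} (ha : 1 < a) (k : ℕ) :
    Tendsto (fun n : ℕ => a ^ (-(n : ℝ) / (k + 1))) atTop (𝓝 0) := by
  have hbase : a ^ (-1 / (k + 1) : ℝ) < 1 :=
    Real.rpow_lt_one_of_one_lt_of_neg ha (by rw [neg_div, neg_lt_zero]; positivity)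
  refine (tendsto_pow_atTop_nhds_zero_of_lt_one (by positivity) hbase).congr fun n => ?_
  rw [← Real.rpow_mul_natCast (by positivity)]
  ring_nf

theorem mul_two_mul_pow_le_div_five {a b e : ℝ} (k : ℕ) (ha : 0 ≤ a) (hb : 0 ≤ b) (he0 : 0 ≤ e)
    (he : e < (1 / 10) * (a / b) ^ ((1 : ℝ) / (k + 1))) : b * (2 * e) ^ (k + 1) ≤ a / 5 := by
  have h10 : (10 * e) ^ (k + 1) < a / b := by
    have := pow_lt_pow_left₀ (show 10 * e < (a / b) ^ ((1 : ℝ) / (k + 1)) by linarith)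
      (by positivity) (Nat.succ_ne_zero k)
    rwa [one_div, ← Nat.cast_add_one, Real.rpow_inv_natCast_pow (by positivity)
      (Nat.succ_ne_zero k)] at this
  have h5 : (5 : ℝ) ≤ 5 ^ (k + 1) := le_self_pow₀ (by norm_num) (Nat.succ_ne_zero k)
  have hb10 : (10 * e) ^ (k + 1) * b ≤ a := mul_le_of_le_div₀ ha hb h10.le
  calc b * (2 * e) ^ (k + 1) = (10 * e) ^ (k + 1) * b / 5 ^ (k + 1) := by
        rw [eq_div_iff (by positivity), show (10 : ℝ) * e = 2 * e * 5 by ring, mul_pow (2 * e)]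
        ring
    _ ≤ a / 5 := div_le_div₀ ha hb10 (by norm_num) h5

section Estimates

variable {𝕜 : Type*} [NormedDivisionRing 𝕜]

theorem norm_mul_pow_add_le {c t : 𝕜} {r : 𝕜 → 𝕜} {A s : ℝ} (k : ℕ) (hA : 0 ≤ A)
    (hr : ‖r t‖ ≤ A * ‖t‖ ^ (k + 1)) (ht : ‖t‖ ≤ s) :
    ‖c * t ^ k + r t‖ ≤ ‖c‖ * s ^ k + A * s ^ (k + 1) := by
  calc ‖c * t ^ k + r t‖ ≤ ‖c‖ * ‖t‖ ^ k + A * ‖t‖ ^ (k + 1) := by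
        grw [norm_add_le, norm_mul, norm_pow, hr]
    _ ≤ ‖c‖ * s ^ k + A * s ^ (k + 1) := by gcongr

variable {φ r : 𝕜 → 𝕜} {c p t₀ : 𝕜} {A δ e s : ℝ} {k : ℕ}

theorem graphDist_closedBall_le (hφ : ∀ t, φ t = c * t ^ (k + 1) + r t) (hA : 0 ≤ A)
    (hr : ∀ t ∈ closedBall (0 : 𝕜) δ, ‖r t‖ ≤ A * ‖t‖ ^ (k + 2))
    (hs0 : 0 ≤ s) (hs1 : s ≤ 1) (he0 : 0 ≤ e) (ht₀ : ‖t₀‖ ≤ e * s) (hesδ : e * s ≤ δ) {K : ℝ}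
    (hp : ‖p‖ ≤ K * s ^ (k + 1)) :
    graphDist φ (closedBall 0 δ) p t₀ ≤
      (K + ‖c‖ * e ^ (k + 1) + A * e ^ (k + 2)) * s ^ (k + 1) := by
  have ht₀δ : t₀ ∈ closedBall 0 δ := mem_closedBall_zero_iff.mpr (ht₀.trans hesδ)
  have hs : (e * s) ^ (k + 2) ≤ e ^ (k + 2) * s ^ (k + 1) := by
    rw [mul_pow, pow_succ s]; gcongr; exact mul_le_of_le_one_right (by positivity) hs1
  calc graphDist φ (closedBall 0 δ) p t₀ ≤ ‖p‖ + ‖φ t₀‖ :=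
        (graphDist_le p ht₀δ).trans (norm_sub_le _ _)
    _ ≤ K * s ^ (k + 1) + (‖c‖ * (e * s) ^ (k + 1) + A * (e ^ (k + 2) * s ^ (k + 1))) := by
        rw [hφ]; grw [hp, norm_mul_pow_add_le (k + 1) hA (hr t₀ ht₀δ) ht₀, hs]
    _ = (K + ‖c‖ * e ^ (k + 1) + A * e ^ (k + 2)) * s ^ (k + 1) := by ring

theorem le_graphDist_closedBall (hφ : ∀ t, φ t = c * t ^ (k + 1) + r t) (hA : 0 ≤ A)
    (hr : ∀ t ∈ closedBall (0 : 𝕜) δ, ‖r t‖ ≤ A * ‖t‖ ^ (k + 2)) (hδ : 0 ≤ δ)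
    (hs0 : 0 ≤ s) (hs1 : s ≤ 1) (he0 : 0 ≤ e) (ht₀ : ‖t₀‖ ≤ e * s) {a m : ℝ} (hme : m ≤ e)
    (hsmall : ‖c‖ * (2 * e) ^ (k + 1) + A * (2 * e) ^ (k + 2) * s + m ≤ a)
    (hp : a * s ^ (k + 1) ≤ ‖p‖) :
    m * s ^ (k + 1) ≤ graphDist φ (closedBall 0 δ) p t₀ := by
  refine le_graphDist ⟨0, mem_closedBall_self hδ⟩ fun t ht hclose => ?_
  have hsk : m * s ^ (k + 1) ≤ e * s := by
    calc m * s ^ (k + 1) ≤ e * s ^ (k + 1) := by gcongr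
      _ ≤ e * s := by gcongr; exact pow_le_of_le_one hs0 hs1 (Nat.succ_ne_zero k)
  have htnorm : ‖t‖ ≤ 2 * e * s := by
    linarith [norm_le_norm_add_norm_sub' t t₀]
  have hφt : ‖φ t‖ ≤ (‖c‖ * (2 * e) ^ (k + 1) + A * (2 * e) ^ (k + 2) * s) * s ^ (k + 1) := by
    rw [hφ]
    refine (norm_mul_pow_add_le (k + 1) hA (hr t ht) htnorm).trans_eq ?_
    ring
  calc m * s ^ (k + 1)
      ≤ a * s ^ (k + 1) - (‖c‖ * (2 * e) ^ (k + 1) + A * (2 * e) ^ (k + 2) * s) * s ^ (k + 1) := by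
        rw [← sub_mul]; gcongr; linarith
    _ ≤ ‖p‖ - ‖φ t‖ := by gcongr
    _ ≤ ‖p - φ t‖ := norm_sub_norm_le p (φ t)

end Estimates

theorem stmt_15_general (u c α : ℂ) (hu : 1 < ‖u‖) (h : ℕ)
    (hα : α ≠ 0) (e A δ : ℝ) (hA : 0 < A) (hδ : 0 < δ)
    (he0 : 0 < e) (he : e < (1 / 10) * ‖α / c‖ ^ ((1 : ℝ) / (h + 1)))
    (r : ℂ → ℂ) (hr : ∀ t ∈ closedBall (0 : ℂ) δ, ‖r t‖ ≤ A * ‖t‖ ^ (h + 2))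
    (φ : ℂ → ℂ) (hφ : ∀ t, φ t = c * t ^ (h + 1) + r t)
    (E : ℕ → ℂ → ℂ)
    (hE : ∀ η : ℝ, 0 < η → ∃ N : ℕ, ∀ n ≥ N, ∀ t ∈ closedBall (0 : ℂ) δ,
      ‖E n t‖ ≤ η * ‖u‖⁻¹ ^ n)
    (γ : ℕ → ℂ → ℂ) (hγ : ∀ n t, γ n t = α * (u⁻¹) ^ n + E n t) :
    ∃ C₁ C₂ : ℝ, 0 < C₁ ∧ 0 < C₂ ∧ ∃ N : ℕ, ∀ n ≥ N, ∀ t₀ : ℂ,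
      ‖t₀‖ ≤ e * ‖u‖ ^ (-(n : ℝ) / (h + 1)) →
      C₁ * ‖u‖⁻¹ ^ n ≤
          sInf ((fun t => max ‖γ n t₀ - φ t‖ ‖t - t₀‖) '' closedBall (0 : ℂ) δ) ∧
        sInf ((fun t => max ‖γ n t₀ - φ t‖ ‖t - t₀‖) '' closedBall (0 : ℂ) δ) ≤
          C₂ * ‖u‖⁻¹ ^ n := by
  set ρ : ℕ → ℝ := fun n => ‖u‖ ^ (-(n : ℝ) / (h + 1))
  have hcα : ‖c‖ * (2 * e) ^ (h + 1) ≤ ‖α‖ / 5 :=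
    mul_two_mul_pow_le_div_five h (norm_nonneg _) (norm_nonneg _) he0.le (by rwa [← norm_div])
  have hE_small : ∀ᶠ n in atTop, ∀ t ∈ closedBall (0 : ℂ) δ, ‖E n t‖ ≤ ‖α‖ / 4 * ‖u‖⁻¹ ^ n :=
    eventually_atTop.mpr (hE _ (by positivity))
  have hρ : Tendsto ρ atTop (𝓝 0) := tendsto_rpow_neg_div_succ hu h
  have hρ_small : ∀ᶠ n in atTop,
      ρ n < 1 ∧ e * ρ n < δ ∧ A * (2 * e) ^ (h + 2) * ρ n < ‖α‖ / 8 :=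
    (hρ.eventually_lt_const one_pos).and <|
      ((hρ.const_mul e).eventually_lt_const (by rwa [mul_zero])).and
      ((hρ.const_mul _).eventually_lt_const (by rw [mul_zero]; positivity))
  refine ⟨min e (‖α‖ / 4), 5 / 4 * ‖α‖ + ‖c‖ * e ^ (h + 1) + A * e ^ (h + 2), by positivity,
    by positivity, eventually_atTop.mp ?_⟩
  filter_upwards [hE_small, hρ_small] with n hEn ⟨hρ1, hρδ, hρA⟩ t₀ ht₀
  have hq : ‖u‖⁻¹ ^ n = ρ n ^ (h + 1) := (rpow_neg_div_succ_pow (by positivity) n h).symm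
  have hγ_sub : ‖γ n t₀ - α * u⁻¹ ^ n‖ ≤ ‖α‖ / 4 * ρ n ^ (h + 1) := by
    rw [hγ, add_sub_cancel_left, ← hq]
    exact hEn t₀ (mem_closedBall_zero_iff.mpr (ht₀.trans hρδ.le))
  have hα_term : ‖α * u⁻¹ ^ n‖ = ‖α‖ * ρ n ^ (h + 1) := by rw [norm_mul, norm_pow, norm_inv, hq]
  rw [hq]
  constructor
  · refine le_graphDist_closedBall hφ hA.le hr hδ.le (by positivity) hρ1.le he0.le ht₀
      (min_le_left _ _) (a := 3 / 4 * ‖α‖)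
      (by linarith [min_le_right e (‖α‖ / 4), norm_nonneg α]) ?_
    linarith [norm_le_norm_add_norm_sub (γ n t₀) (α * u⁻¹ ^ n)]
  · refine graphDist_closedBall_le hφ hA.le hr (by positivity) hρ1.le he0.le ht₀ hρδ.le ?_
    linarith [norm_le_norm_add_norm_sub' (γ n t₀) (α * u⁻¹ ^ n)]

/-- Distance estimate (Lemma 5.2): for points `r_n = (γ_n(y₀+t₀), y₀+t₀)` on the
pulled-back stable graph with `|t₀| ≤ ε|u|^{-n/(h+1)}`, the sup-norm distance
from `r_n` to the curve `x = φ(t) = c t^{h+1} + O(t^{h+2})` is `≍ |u|^{-n}`. -/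
theorem stmt_15 (u c α : ℂ) (hu : 1 < ‖u‖) (h : ℕ) (hh : 1 ≤ h)
    (hc : c ≠ 0) (hα : α ≠ 0) (e A δ : ℝ) (hA : 0 < A) (hδ : 0 < δ)
    (he0 : 0 < e) (he : e < (1 / 10) * ‖α / c‖ ^ ((1 : ℝ) / (h + 1)))
    (r : ℂ → ℂ) (hr : ∀ t ∈ closedBall (0 : ℂ) δ, ‖r t‖ ≤ A * ‖t‖ ^ (h + 2))
    (φ : ℂ → ℂ) (hφ : ∀ t, φ t = c * t ^ (h + 1) + r t)
    (E : ℕ → ℂ → ℂ)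
    (hE : ∀ η : ℝ, 0 < η → ∃ N : ℕ, ∀ n ≥ N, ∀ t ∈ closedBall (0 : ℂ) δ,
      ‖E n t‖ ≤ η * ‖u‖⁻¹ ^ n)
    (γ : ℕ → ℂ → ℂ) (hγ : ∀ n t, γ n t = α * (u⁻¹) ^ n + E n t) :
    ∃ C₁ C₂ : ℝ, 0 < C₁ ∧ 0 < C₂ ∧ ∃ N : ℕ, ∀ n ≥ N, ∀ t₀ : ℂ,
      ‖t₀‖ ≤ e * ‖u‖ ^ (-(n : ℝ) / (h + 1)) →
      C₁ * ‖u‖⁻¹ ^ n ≤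
          sInf ((fun t => max ‖γ n t₀ - φ t‖ ‖t - t₀‖) '' closedBall (0 : ℂ) δ) ∧
        sInf ((fun t => max ‖γ n t₀ - φ t‖ ‖t - t₀‖) '' closedBall (0 : ℂ) δ) ≤
          C₂ * ‖u‖⁻¹ ^ n :=
  stmt_15_general u c α hu h hα e A δ hA hδ he0 he r hr φ hφ E hE γ hγ
end

section
/- Let m ≥ 1 be an integer, |u₀| > 1, and let x, α, v : D(0, R) → ℂ be holomorphic with x(λ) = λ^m + O(λ^{m+1}), α(0) ≠ 0 and |α(λ) - α(0)| ≤ |α(0)|/10, and v(λ) = u₀(1 + O(λ)) with v nonvanishing. Then for every δ < |u₀|^{-1} and all sufficiently large n, the equation x(λ) = α(λ)·v(λ)^{-n} has at least m distinct solutions λ in the disk D(0, C|u₀|^{-n/m}) for some constant C independent of n. -/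
/-!
For large `n` the equation `x λ - α λ * (v λ)⁻¹ ^ n = 0` is a small perturbation of
`λ ^ m = α 0 * u₀⁻¹ ^ n`, whose `m` roots have modulus `r_n = ‖α 0‖ ^ (1/m) * ‖u₀‖ ^ (-n/m)`.
On the disk of radius `2 r_n` the error is `o(r_n ^ m)`: `x λ - λ ^ m = O(r_n ^ (m+1))`,
`α λ - α 0` is small by continuity, and `(u₀ / v λ) ^ n - 1 = O(n r_n)` with `n r_n → 0`.
After rescaling, `|z ^ m - 1|` is bounded below on small disjoint circles around the `m`-th
roots of unity, so the minimum modulus principle puts a zero of the perturbed function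
inside each of these circles.
-/

open Metric Polynomial Filter Topology

theorem exists_mem_closedBall_eq_zero_of_norm_lt_on_sphere {f : ℂ → ℂ} {c : ℂ} {r : ℝ}
    (hr : 0 < r) (hf : DifferentiableOn ℂ f (closedBall c r))
    (hlt : ∀ z ∈ sphere c r, ‖f c‖ < ‖f z‖) :
    ∃ z ∈ closedBall c r, f z = 0 := by
  by_contra! hne
  obtain ⟨z₀, hz₀, hmin⟩ := (isCompact_sphere c r).exists_isMinOn
    (NormedSpace.sphere_nonempty.2 hr.le) (hf.continuousOn.mono sphere_subset_closedBall).norm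
  have hfc : 0 < ‖f c‖ := norm_pos_iff.2 (hne c (mem_closedBall_self hr.le))
  -- maximum modulus principle for `1 / f`
  have hmax : ‖(f c)⁻¹‖ ≤ ‖(f z₀)⁻¹‖ := by
    refine Complex.norm_le_of_forall_mem_frontier_norm_le (f := fun z => (f z)⁻¹) isBounded_ball
      (DifferentiableOn.diffContOnCl ?_) (fun z hz => ?_) (subset_closure (mem_ball_self hr))
    · rw [closure_ball c hr.ne']; exact hf.inv hne
    · rw [frontier_ball c hr.ne'] at hz
      rw [norm_inv, norm_inv]
      exact inv_anti₀ (hfc.trans (hlt z₀ hz₀)) (hmin hz)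
  rw [norm_inv, norm_inv, inv_le_inv₀ hfc (hfc.trans (hlt z₀ hz₀))] at hmax
  exact (hlt z₀ hz₀).not_ge hmax

theorem Finset.exists_pos_forall_le_dist {α : Type*} [MetricSpace α] (s : Finset α) :
    ∃ σ > 0, ∀ a ∈ s, ∀ b ∈ s, a ≠ b → σ ≤ dist a b := by
  have h : ∀ᶠ σ in 𝓝[>] (0 : ℝ), ∀ p ∈ s.offDiag, σ ≤ dist p.1 p.2 :=
    (Filter.eventually_all_finset _).2 fun p hp =>
      (eventually_le_nhds (dist_pos.2 (Finset.mem_offDiag.1 hp).2.2)).filter_mono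
        nhdsWithin_le_nhds
  obtain ⟨σ, hσ, hσ0⟩ := (h.and self_mem_nhdsWithin).exists
  exact ⟨σ, hσ0, fun a ha b hb hab => hσ (a, b) (Finset.mem_offDiag.2 ⟨ha, hb, hab⟩)⟩

theorem IsPrimitiveRoot.prod_nthRootsFinset_sub {R : Type*} [CommRing R] [IsDomain R] {ζ : R}
    {m : ℕ} (hζ : IsPrimitiveRoot ζ m) (hm : 0 < m) (z : R) :
    ∏ ξ ∈ nthRootsFinset m (1 : R), (z - ξ) = z ^ m - 1 := by
  simpa [eval_prod] using congrArg (eval z) (X_pow_sub_one_eq_prod hm hζ).symm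

theorem pow_le_norm_pow_sub_one {m : ℕ} (hm : 0 < m) {z : ℂ} {s : ℝ} (hs : 0 ≤ s)
    (h : ∀ ξ ∈ nthRootsFinset m (1 : ℂ), s ≤ ‖z - ξ‖) : s ^ m ≤ ‖z ^ m - 1‖ := by
  have hζ := Complex.isPrimitiveRoot_exp m hm.ne'
  calc s ^ m = ∏ _ξ ∈ nthRootsFinset m (1 : ℂ), s := by
        rw [Finset.prod_const, hζ.card_nthRootsFinset]
    _ ≤ ∏ ξ ∈ nthRootsFinset m (1 : ℂ), ‖z - ξ‖ := Finset.prod_le_prod (fun _ _ => hs) h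
    _ = ‖z ^ m - 1‖ := by rw [← norm_prod, hζ.prod_nthRootsFinset_sub hm]

theorem pow_le_norm_pow_sub_one_of_mem_sphere {m : ℕ} (hm : 0 < m) {ξ z : ℂ} {s : ℝ}
    (hsep : ∀ ξ' ∈ nthRootsFinset m (1 : ℂ), ξ' ≠ ξ → 2 * s ≤ dist ξ ξ') (hz : z ∈ sphere ξ s) :
    s ^ m ≤ ‖z ^ m - 1‖ := by
  rw [mem_sphere] at hz
  refine pow_le_norm_pow_sub_one hm (hz ▸ dist_nonneg) fun ξ' hξ' => ?_
  rw [← dist_eq_norm]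
  rcases eq_or_ne ξ' ξ with rfl | hne
  · exact hz.ge
  · linarith [hsep ξ' hξ' hne, dist_triangle_left ξ ξ' z]

theorem exists_card_eq_zeros_of_norm_sub_pow_sub_one_le {m : ℕ} (hm : 0 < m) :
    ∃ c > 0, ∀ F : ℂ → ℂ, DifferentiableOn ℂ F (closedBall 0 2) →
      (∀ z ∈ closedBall (0 : ℂ) 2, ‖F z - (z ^ m - 1)‖ ≤ c) →
      ∃ S : Finset ℂ, S.card = m ∧ ∀ z ∈ S, z ∈ closedBall (0 : ℂ) 2 ∧ F z = 0 := by
  classical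
  set T := nthRootsFinset m (1 : ℂ)
  have hT : ∀ ξ ∈ T, ‖ξ‖ = 1 := fun ξ hξ =>
    Complex.norm_eq_one_of_pow_eq_one ((mem_nthRootsFinset hm 1).1 hξ) hm.ne'
  obtain ⟨σ, hσ, hsep⟩ := T.exists_pos_forall_le_dist
  set s := min σ 1 / 3
  have hs : 0 < s := by positivity
  have h3s : ∀ ξ ∈ T, ∀ ξ' ∈ T, ξ ≠ ξ' → 3 * s ≤ dist ξ ξ' := fun ξ hξ ξ' hξ' hne =>
    (by simp only [s]; linarith [min_le_left σ 1] : 3 * s ≤ σ).trans (hsep ξ hξ ξ' hξ' hne)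
  have hball : ∀ ξ ∈ T, closedBall ξ s ⊆ closedBall 0 2 := fun ξ hξ =>
    closedBall_subset_closedBall' (by
      rw [dist_zero_right, hT ξ hξ]; simp only [s]; linarith [min_le_right σ 1])
  refine ⟨s ^ m / 3, by positivity, fun F hF hFG => ?_⟩
  have hzero : ∀ ξ ∈ T, ∃ z ∈ closedBall ξ s, F z = 0 := by
    intro ξ hξ
    refine exists_mem_closedBall_eq_zero_of_norm_lt_on_sphere hs (hF.mono (hball ξ hξ))
      fun z hz => ?_
    have hcenter : ‖F ξ‖ ≤ s ^ m / 3 := by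
      simpa [(mem_nthRootsFinset hm 1).1 hξ] using hFG ξ (hball ξ hξ (mem_closedBall_self hs.le))
    have hsphere : s ^ m ≤ ‖z ^ m - 1‖ := pow_le_norm_pow_sub_one_of_mem_sphere hm
      (fun ξ' hξ' hne => by linarith [h3s ξ hξ ξ' hξ' hne.symm]) hz
    have hFz := hFG z (hball ξ hξ (sphere_subset_closedBall hz))
    have hs' : 0 < s ^ m := by positivity
    linarith [norm_sub_norm_le (z ^ m - 1) (F z), norm_sub_rev (F z) (z ^ m - 1)]
  choose! g hgball hgzero using hzero
  refine ⟨T.image g, ?_, ?_⟩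
  · rw [Finset.card_image_of_injOn, (Complex.isPrimitiveRoot_exp m hm.ne').card_nthRootsFinset]
    intro ξ hξ ξ' hξ' hgg
    by_contra hne
    have hgξ := mem_closedBall.1 (hgball ξ hξ)
    have hgξ' := mem_closedBall.1 (hgball ξ' hξ')
    rw [hgg] at hgξ
    linarith [h3s ξ hξ ξ' hξ' hne, dist_triangle_left ξ ξ' (g ξ')]
  · simp only [Finset.mem_image]
    rintro _ ⟨ξ, hξ, rfl⟩
    exact ⟨hball ξ hξ (hgball ξ hξ), hgzero ξ hξ⟩

theorem exists_card_eq_zeros_of_norm_sub_pow_sub_pow_le {m : ℕ} (hm : 0 < m) :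
    ∃ c > 0, ∀ (w : ℂ) (F : ℂ → ℂ), w ≠ 0 → DifferentiableOn ℂ F (closedBall 0 (2 * ‖w‖)) →
      (∀ z ∈ closedBall (0 : ℂ) (2 * ‖w‖), ‖F z - (z ^ m - w ^ m)‖ ≤ c * ‖w‖ ^ m) →
      ∃ S : Finset ℂ, S.card = m ∧ ∀ z ∈ S, z ∈ closedBall (0 : ℂ) (2 * ‖w‖) ∧ F z = 0 := by
  obtain ⟨c, hc, hzeros⟩ := exists_card_eq_zeros_of_norm_sub_pow_sub_one_le hm
  refine ⟨c, hc, fun w F hw hF hFG => ?_⟩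
  have hmaps : Set.MapsTo (w * ·) (closedBall (0 : ℂ) 2) (closedBall 0 (2 * ‖w‖)) := by
    intro z hz
    rw [mem_closedBall_zero_iff] at hz ⊢
    rw [norm_mul, mul_comm 2]
    gcongr
  obtain ⟨S, hcard, hS⟩ := hzeros (fun z => F (w * z) / w ^ m)
    ((hF.comp (differentiableOn_id.const_mul w) hmaps).div_const _) fun z hz => by
      have hscale : F (w * z) / w ^ m - (z ^ m - 1)
          = (F (w * z) - ((w * z) ^ m - w ^ m)) / w ^ m := by
        field_simp
        ring
      rw [hscale, norm_div, norm_pow, div_le_iff₀ (by positivity)]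
      exact hFG _ (hmaps hz)
  refine ⟨S.image (w * ·), by rw [Finset.card_image_of_injective _ (mul_right_injective₀ hw), hcard],
    ?_⟩
  simp only [Finset.mem_image]
  rintro _ ⟨z, hz, rfl⟩
  obtain ⟨hz2, hFz⟩ := hS z hz
  exact ⟨hmaps hz2, by simpa [hw] using hFz⟩

theorem norm_pow_sub_one_le {R : Type*} [NormedRing R] [NormOneClass R] (p : R) (n : ℕ) :
    ‖p ^ n - 1‖ ≤ (1 + ‖p - 1‖) ^ n - 1 := by
  induction n with
  | zero => simp
  | succ n ih =>
    have hp : ‖p‖ ≤ 1 + ‖p - 1‖ := by simpa [add_comm] using norm_le_norm_add_norm_sub' p 1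
    calc ‖p ^ (n + 1) - 1‖ = ‖p * (p ^ n - 1) + (p - 1)‖ := by rw [pow_succ']; congr 1; noncomm_ring
      _ ≤ ‖p‖ * ‖p ^ n - 1‖ + ‖p - 1‖ := (norm_add_le _ _).trans (by gcongr; exact norm_mul_le _ _)
      _ ≤ (1 + ‖p - 1‖) * ((1 + ‖p - 1‖) ^ n - 1) + ‖p - 1‖ := by gcongr
      _ = (1 + ‖p - 1‖) ^ (n + 1) - 1 := by ring

theorem norm_pow_sub_one_le_two_mul {R : Type*} [NormedRing R] [NormOneClass R] {p : R}
    {n : ℕ} {δ : ℝ} (hp : ‖p - 1‖ ≤ δ) (hn : n * δ ≤ 1) : ‖p ^ n - 1‖ ≤ 2 * n * δ := by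
  have hδ : 0 ≤ δ := (norm_nonneg _).trans hp
  calc ‖p ^ n - 1‖ ≤ (1 + δ) ^ n - 1 := (norm_pow_sub_one_le p n).trans (by gcongr)
    _ ≤ Real.exp (n * δ) - 1 := by
      rw [Real.exp_nat_mul]
      gcongr
      linarith [Real.add_one_le_exp δ]
    _ ≤ 2 * n * δ := by
      have hnδ : 0 ≤ n * δ := mul_nonneg n.cast_nonneg hδ
      have := Real.abs_exp_sub_one_le (x := n * δ) (by rwa [abs_of_nonneg hnδ])
      rw [abs_of_nonneg hnδ] at this
      linarith [le_abs_self (Real.exp (n * δ) - 1)]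

theorem norm_div_pow_sub_one_le {𝕜 : Type*} [NormedField 𝕜] {u v : 𝕜} {ε : ℝ} {n : ℕ}
    (hu : 1 ≤ ‖u‖) (hv : ‖v - u‖ ≤ ε) (hn : n * ε ≤ 1 / 4) :
    ‖(u / v) ^ n - 1‖ ≤ 4 * n * ε := by
  rcases n.eq_zero_or_pos with rfl | hn0
  · simp
  have hε : ε ≤ 1 / 4 :=
    (le_mul_of_one_le_left ((norm_nonneg _).trans hv) (by exact_mod_cast hn0)).trans hn
  have hv' : 1 / 2 ≤ ‖v‖ := by linarith [norm_sub_norm_le u v, norm_sub_rev v u]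
  have hp : ‖u / v - 1‖ ≤ 2 * ε := by
    rw [div_sub_one (norm_pos_iff.1 (by linarith)), norm_div, norm_sub_rev,
      div_le_iff₀ (by linarith)]
    nlinarith [(norm_nonneg _).trans hv]
  calc ‖(u / v) ^ n - 1‖ ≤ 2 * n * (2 * ε) := norm_pow_sub_one_le_two_mul hp (by linarith)
    _ = 4 * n * ε := by ring

theorem norm_sub_mul_inv_pow_sub_le {𝕜 : Type*} [NormedField 𝕜] {u : 𝕜} (hu : u ≠ 0)
    (X Z a a₀ V : 𝕜) (n : ℕ) :
    ‖(X - a * V⁻¹ ^ n) - (Z - a₀ * u⁻¹ ^ n)‖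
      ≤ ‖X - Z‖ + (‖a - a₀‖ + ‖a‖ * ‖(u / V) ^ n - 1‖) * ‖u‖⁻¹ ^ n := by
  have hV : (u / V) ^ n * u⁻¹ ^ n = V⁻¹ ^ n := by
    rw [← mul_pow, div_eq_mul_inv, mul_comm u, mul_assoc, mul_inv_cancel₀ hu, mul_one]
  have h : (X - a * V⁻¹ ^ n) - (Z - a₀ * u⁻¹ ^ n)
      = (X - Z) - ((a - a₀) + a * ((u / V) ^ n - 1)) * u⁻¹ ^ n := by
    linear_combination a * hV
  rw [h]
  calc _ ≤ ‖X - Z‖ + ‖((a - a₀) + a * ((u / V) ^ n - 1)) * u⁻¹ ^ n‖ := norm_sub_le _ _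
    _ ≤ _ := by
      rw [norm_mul, norm_pow, norm_inv]
      gcongr
      exact (norm_add_le _ _).trans_eq (by rw [norm_mul])

theorem eventually_norm_sub_pow_sub_pow_le {m : ℕ} {u₀ : ℂ} (hu₀ : 1 ≤ ‖u₀‖) {R : ℝ} (hR : 0 < R)
    {x α v : ℂ → ℂ} {B B' : ℝ}
    (hx : ∀ lam ∈ ball (0 : ℂ) R, ‖x lam - lam ^ m‖ ≤ B * ‖lam‖ ^ (m + 1))
    (hα : ContinuousAt α 0) (hα0 : α 0 ≠ 0)
    (hv : ∀ lam ∈ ball (0 : ℂ) R, ‖v lam - u₀‖ ≤ B' * ‖lam‖)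
    {w : ℕ → ℂ} (hw : ∀ n, w n ^ m = α 0 * u₀⁻¹ ^ n)
    (hw0 : Tendsto (fun n => ‖w n‖) atTop (𝓝 0))
    (hnw0 : Tendsto (fun n => n * ‖w n‖) atTop (𝓝 0)) {c : ℝ} (hc : 0 < c) :
    ∀ᶠ n in atTop, ∀ lam : ℂ, ‖lam‖ ≤ 2 * ‖w n‖ → lam ∈ ball (0 : ℂ) R ∧
      ‖(x lam - α lam * (v lam)⁻¹ ^ n) - (lam ^ m - w n ^ m)‖ ≤ c * ‖w n‖ ^ m := by
  set A := ‖α 0‖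
  have hA : 0 < A := norm_pos_iff.2 hα0
  have hu₀0 : u₀ ≠ 0 := norm_pos_iff.1 (zero_lt_one.trans_le hu₀)
  have hwm : ∀ n, ‖w n‖ ^ m = A * ‖u₀‖⁻¹ ^ n := fun n => by
    rw [← norm_pow, hw, norm_mul, norm_pow, norm_inv]
  obtain ⟨η, hη, hball⟩ := Metric.eventually_nhds_iff_ball.1
    ((Metric.tendsto_nhds.1 hα (c * A / 3) (by positivity)).and (ball_mem_nhds 0 hR))
  have hlt {f : ℕ → ℝ} (hf : Tendsto f atTop (𝓝 0)) (K : ℝ) {ε : ℝ} (hε : 0 < ε) :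
      ∀ᶠ n in atTop, K * f n < ε :=
    (hf.const_mul K).eventually_lt_const (by rwa [mul_zero])
  filter_upwards [hlt hw0 2 hη, hlt hw0 (|B| * 2 ^ (m + 1)) (by positivity : 0 < c / 3),
    hlt hnw0 (2 * |B'|) (by norm_num : (0 : ℝ) < 1 / 4),
    hlt hnw0 ((A + c * A / 3) * (8 * |B'|)) (by positivity : 0 < c * A / 3)]
    with n hη' hB hB'4 hB'c lam hlam
  obtain ⟨hαlam, hlamR⟩ := hball lam (mem_ball_zero_iff.2 (by linarith))
  rw [dist_eq_norm] at hαlam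
  refine ⟨hlamR, ?_⟩
  have hxlam : ‖x lam - lam ^ m‖ ≤ c / 3 * ‖w n‖ ^ m :=
    calc ‖x lam - lam ^ m‖ ≤ |B| * (2 * ‖w n‖) ^ (m + 1) :=
          (hx lam hlamR).trans (by gcongr; exact le_abs_self B)
      _ = (|B| * 2 ^ (m + 1) * ‖w n‖) * ‖w n‖ ^ m := by ring
      _ ≤ c / 3 * ‖w n‖ ^ m := by gcongr
  have hvlam : ‖v lam - u₀‖ ≤ 2 * |B'| * ‖w n‖ :=
    (hv lam hlamR).trans (by nlinarith [le_abs_self B', abs_nonneg B', norm_nonneg lam])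
  have hpow := norm_div_pow_sub_one_le (n := n) hu₀ hvlam (by linarith)
  have hαnorm : ‖α lam‖ ≤ A + c * A / 3 := by
    linarith [norm_le_norm_add_norm_sub' (α lam) (α 0)]
  calc _ ≤ ‖x lam - lam ^ m‖ + (‖α lam - α 0‖ + ‖α lam‖ * ‖(u₀ / v lam) ^ n - 1‖) * ‖u₀‖⁻¹ ^ n :=
        by rw [hw n]; exact norm_sub_mul_inv_pow_sub_le hu₀0 _ _ _ _ _ n
    _ ≤ c / 3 * ‖w n‖ ^ m
        + (c * A / 3 + (A + c * A / 3) * (4 * n * (2 * |B'| * ‖w n‖))) * ‖u₀‖⁻¹ ^ n := by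
        gcongr
    _ ≤ c * ‖w n‖ ^ m := by
        rw [hwm]
        have hρ : 0 ≤ ‖u₀‖⁻¹ ^ n := by positivity
        nlinarith [mul_le_mul_of_nonneg_right hB'c.le hρ]

theorem norm_pow_eq_rpow_of_pow_eq_inv {τ u : ℂ} {m : ℕ} (hm : m ≠ 0) (hτ : τ ^ m = u⁻¹)
    (n : ℕ) : ‖τ‖ ^ n = ‖u‖ ^ (-(n : ℝ) / m) := by
  rw [← Real.pow_rpow_inv_natCast (norm_nonneg τ) hm, ← norm_pow, hτ, norm_inv,
    Real.inv_rpow (norm_nonneg _), ← Real.rpow_neg (norm_nonneg _),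
    ← Real.rpow_mul_natCast (norm_nonneg _)]
  ring_nf

theorem exists_seq_pow_eq_mul_inv_pow {m : ℕ} (hm : 0 < m) {a₀ u : ℂ} (ha₀ : a₀ ≠ 0)
    (hu : 1 < ‖u‖) :
    ∃ K > 0, ∃ w : ℕ → ℂ, (∀ n, w n ^ m = a₀ * u⁻¹ ^ n) ∧
      (∀ n : ℕ, ‖w n‖ = K * ‖u‖ ^ (-(n : ℝ) / m)) ∧
      Tendsto (fun n => ‖w n‖) atTop (𝓝 0) ∧ Tendsto (fun n => n * ‖w n‖) atTop (𝓝 0) := by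
  obtain ⟨a, ha⟩ := IsAlgClosed.exists_pow_nat_eq a₀ hm
  obtain ⟨τ, hτ⟩ := IsAlgClosed.exists_pow_nat_eq u⁻¹ hm
  have ha0 : a ≠ 0 := by rintro rfl; exact ha₀ (by rw [← ha, zero_pow hm.ne'])
  have hτ1 : ‖τ‖ < 1 := by
    rw [← pow_lt_one_iff_of_nonneg (norm_nonneg τ) hm.ne', ← norm_pow, hτ, norm_inv]
    exact inv_lt_one_of_one_lt₀ hu
  have hnorm : ∀ n : ℕ, ‖a * τ ^ n‖ = ‖a‖ * ‖τ‖ ^ n := fun n => by rw [norm_mul, norm_pow]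
  refine ⟨‖a‖, norm_pos_iff.2 ha0, fun n => a * τ ^ n, fun n => ?_, fun n => ?_, ?_, ?_⟩
  · rw [mul_pow, ← pow_mul, mul_comm n, pow_mul, ha, hτ]
  · rw [hnorm, norm_pow_eq_rpow_of_pow_eq_inv hm.ne' hτ]
  · simpa [hnorm] using (tendsto_pow_atTop_nhds_zero_of_lt_one (norm_nonneg τ) hτ1).const_mul ‖a‖
  · simpa [hnorm, mul_left_comm] using
      (tendsto_self_mul_const_pow_of_lt_one (norm_nonneg τ) hτ1).const_mul ‖a‖

theorem stmt_16_general (m : ℕ) (hm : 1 ≤ m) (u₀ : ℂ) (hu₀ : 1 < ‖u₀‖) (R : ℝ) (hR : 0 < R)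
    (x α v : ℂ → ℂ)
    (hx_hol : DifferentiableOn ℂ x (ball (0 : ℂ) R))
    (hα_hol : DifferentiableOn ℂ α (ball (0 : ℂ) R))
    (hv_hol : DifferentiableOn ℂ v (ball (0 : ℂ) R))
    (hx : ∃ B : ℝ, ∀ lam ∈ ball (0 : ℂ) R, ‖x lam - lam ^ m‖ ≤ B * ‖lam‖ ^ (m + 1))
    (hα0 : α 0 ≠ 0)
    (hv0 : ∀ lam ∈ ball (0 : ℂ) R, v lam ≠ 0)
    (hv : ∃ B' : ℝ, ∀ lam ∈ ball (0 : ℂ) R, ‖v lam - u₀‖ ≤ B' * ‖lam‖) :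
    ∀ δ : ℝ, 0 < δ → δ < ‖u₀‖⁻¹ →
      ∃ C : ℝ, 0 < C ∧ ∃ N : ℕ, ∀ n ≥ N,
        ∃ S : Finset ℂ, m ≤ S.card ∧ ∀ lam ∈ S,
          lam ∈ ball (0 : ℂ) (C * ‖u₀‖ ^ (-(n : ℝ) / m)) ∧
          lam ∈ ball (0 : ℂ) R ∧
          x lam = α lam * (v lam)⁻¹ ^ n := by
  intro _ _ _
  obtain ⟨B, hB⟩ := hx
  obtain ⟨B', hB'⟩ := hv
  obtain ⟨c, hc, hzeros⟩ := exists_card_eq_zeros_of_norm_sub_pow_sub_pow_le hm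
  obtain ⟨K, hK, w, hw, hwK, hw0, hnw0⟩ := exists_seq_pow_eq_mul_inv_pow hm hα0 hu₀
  obtain ⟨N, hN⟩ := eventually_atTop.1 <| eventually_norm_sub_pow_sub_pow_le hu₀.le hR hB
    (hα_hol.continuousOn.continuousAt (ball_mem_nhds 0 hR)) hα0 hB' hw hw0 hnw0 hc
  refine ⟨3 * K, by positivity, N, fun n hn => ?_⟩
  have hball : closedBall (0 : ℂ) (2 * ‖w n‖) ⊆ ball 0 R := fun z hz =>
    (hN n hn z (mem_closedBall_zero_iff.1 hz)).1
  obtain ⟨S, hcard, hS⟩ := hzeros (w n) (fun lam => x lam - α lam * (v lam)⁻¹ ^ n)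
    (norm_pos_iff.1 (by rw [hwK]; positivity))
    ((hx_hol.sub (hα_hol.mul ((hv_hol.inv hv0).pow n))).mono hball)
    fun z hz => (hN n hn z (mem_closedBall_zero_iff.1 hz)).2
  refine ⟨S, hcard.ge, fun z hz => ?_⟩
  obtain ⟨hz2, hFz⟩ := hS z hz
  refine ⟨?_, hball hz2, sub_eq_zero.1 hFz⟩
  rw [mem_closedBall_zero_iff, hwK] at hz2
  have hrad : 0 < K * ‖u₀‖ ^ (-(n : ℝ) / m) := by positivity
  exact mem_ball_zero_iff.2 (by linarith)

/-- Lemma 4.7 (counting step): the equation `x(λ) = α(λ)·v(λ)^{-n}` has at least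
`m` distinct solutions in a disk of radius `C|u₀|^{-n/m}`, for large `n`. -/
theorem stmt_16 (m : ℕ) (hm : 1 ≤ m) (u₀ : ℂ) (hu₀ : 1 < ‖u₀‖) (R : ℝ) (hR : 0 < R)
    (x α v : ℂ → ℂ)
    (hx_hol : DifferentiableOn ℂ x (ball (0 : ℂ) R))
    (hα_hol : DifferentiableOn ℂ α (ball (0 : ℂ) R))
    (hv_hol : DifferentiableOn ℂ v (ball (0 : ℂ) R))
    (hx : ∃ B : ℝ, ∀ lam ∈ ball (0 : ℂ) R, ‖x lam - lam ^ m‖ ≤ B * ‖lam‖ ^ (m + 1))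
    (hα0 : α 0 ≠ 0) (hα : ∀ lam ∈ ball (0 : ℂ) R, ‖α lam - α 0‖ ≤ ‖α 0‖ / 10)
    (hv0 : ∀ lam ∈ ball (0 : ℂ) R, v lam ≠ 0)
    (hv : ∃ B' : ℝ, ∀ lam ∈ ball (0 : ℂ) R, ‖v lam - u₀‖ ≤ B' * ‖lam‖) :
    ∀ δ : ℝ, 0 < δ → δ < ‖u₀‖⁻¹ →
      ∃ C : ℝ, 0 < C ∧ ∃ N : ℕ, ∀ n ≥ N,
        ∃ S : Finset ℂ, m ≤ S.card ∧ ∀ lam ∈ S,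
          lam ∈ ball (0 : ℂ) (C * ‖u₀‖ ^ (-(n : ℝ) / m)) ∧
          lam ∈ ball (0 : ℂ) R ∧
          x lam = α lam * (v lam)⁻¹ ^ n :=
  stmt_16_general m hm u₀ hu₀ R hR x α v hx_hol hα_hol hv_hol hx hα0 hv0 hv
end

section
/- Let u ∈ ℂ with |u| > 1 and s ∈ ℂ with 0 < |s| < 1, and let h ≥ 2 be an integer. Suppose (λ_n) is a sequence of complex numbers and m, q are positive integers such that λ_n^m ≅ u^{-nh} (i.e. λ_n^m · u^{nh} converges to a nonzero constant) and λ_n^q ≅ (u^{-1}s)^n. Then u^{m - hq} = s^m. -/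
/-!
Raise the first relation to the power `q` and the second to the power `m`: in the quotient the
powers of `λ_n` cancel, leaving `(u^{hq} s^m / u^m)^n`, which therefore converges to a nonzero
limit. A geometric sequence with a nonzero limit has ratio `1`.
-/

open Filter Topology

theorem eq_one_of_tendsto_pow {M : Type*} [MonoidWithZero M] [IsRightCancelMulZero M]
    [TopologicalSpace M] [T2Space M] [ContinuousMul M] {c L : M} (hL : L ≠ 0)
    (hc : Tendsto (fun n : ℕ => c ^ n) atTop (𝓝 L)) : c = 1 := by
  have hshift : Tendsto (fun n : ℕ => c * c ^ n) atTop (𝓝 L) := by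
    simpa only [Function.comp_def, pow_succ'] using hc.comp (tendsto_add_atTop_nat 1)
  have hcL : c * L = 1 * L := by
    rw [one_mul]
    exact tendsto_nhds_unique (hc.const_mul c) hshift
  exact mul_right_cancel₀ hL hcL

theorem pow_eq_pow_of_tendsto_pow_mul_pow {𝕜 : Type*} [Field 𝕜] [TopologicalSpace 𝕜]
    [T2Space 𝕜] [ContinuousMul 𝕜] [ContinuousInv₀ 𝕜] {x : ℕ → 𝕜} {a b K K' : 𝕜} {m q : ℕ}
    (hK : K ≠ 0) (hK' : K' ≠ 0)
    (ha : Tendsto (fun n : ℕ => x n ^ m * a ^ n) atTop (𝓝 K))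
    (hb : Tendsto (fun n : ℕ => x n ^ q * b ^ n) atTop (𝓝 K')) :
    a ^ q = b ^ m := by
  have hquot : Tendsto (fun n : ℕ => (a ^ q / b ^ m) ^ n) atTop (𝓝 (K ^ q / K' ^ m)) := by
    refine ((ha.pow q).div (hb.pow m) (pow_ne_zero _ hK')).congr' ?_
    filter_upwards [(hb.pow m).eventually_ne (pow_ne_zero _ hK')] with n hn
    have hx : x n ^ (m * q) ≠ 0 := by
      contrapose! hn
      rw [mul_pow, ← pow_mul, mul_comm q m, hn, zero_mul]
    simp only [Pi.div_apply, mul_pow, div_pow, ← pow_mul]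
    rw [mul_comm q m, mul_comm n q, mul_comm n m, mul_div_mul_left _ _ hx]
  have hc := eq_one_of_tendsto_pow (div_ne_zero (pow_ne_zero _ hK) (pow_ne_zero _ hK')) hquot
  have hbm : b ^ m ≠ 0 := by
    rintro h0
    simp [h0] at hc
  exact (div_eq_one_iff_eq hbm).mp hc

theorem stmt_17_general (u s : ℂ) (hu : 1 < ‖u‖) (hs0 : 0 < ‖s‖)
    (h m q : ℕ)
    (lam : ℕ → ℂ) (K K' : ℂ) (hK : K ≠ 0) (hK' : K' ≠ 0)
    (h1 : Tendsto (fun n : ℕ => lam n ^ m * u ^ (n * h)) atTop (𝓝 K))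
    (h2 : Tendsto (fun n : ℕ => lam n ^ q * (u * s⁻¹) ^ n) atTop (𝓝 K')) :
    u ^ ((m : ℤ) - (h : ℤ) * (q : ℤ)) = s ^ (m : ℤ) := by
  have hu0 : u ≠ 0 := norm_pos_iff.mp (one_pos.trans hu)
  have hs : s ≠ 0 := norm_pos_iff.mp hs0
  have key : (u ^ h) ^ q = (u * s⁻¹) ^ m :=
    pow_eq_pow_of_tendsto_pow_mul_pow hK hK' (by simpa only [pow_mul'] using h1) h2
  rw [zpow_sub₀ hu0, zpow_mul, zpow_natCast, zpow_natCast, zpow_natCast, zpow_natCast, key,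
    mul_pow, inv_pow]
  field_simp

theorem stmt_17 (u s : ℂ) (hu : 1 < ‖u‖) (hs0 : 0 < ‖s‖) (hs1 : ‖s‖ < 1)
    (h m q : ℕ) (hh : 2 ≤ h) (hm : 1 ≤ m) (hq : 1 ≤ q)
    (lam : ℕ → ℂ) (K K' : ℂ) (hK : K ≠ 0) (hK' : K' ≠ 0)
    (h1 : Tendsto (fun n : ℕ => lam n ^ m * u ^ (n * h)) atTop (𝓝 K))
    (h2 : Tendsto (fun n : ℕ => lam n ^ q * (u * s⁻¹) ^ n) atTop (𝓝 K')) :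
    u ^ ((m : ℤ) - (h : ℤ) * (q : ℤ)) = s ^ (m : ℤ) :=
  stmt_17_general u s hu hs0 h m q lam K K' hK hK' h1 h2
end
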